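/- Pole order of the quadratic Hamiltonian (Proposition A.1, pointwise/bilinear-form version). Define P(z) = Σ_{α∈Σ} Σ_{p=0}^{m_α−1} D^α_p (z−z_α)^{−(p+1)}. Then the scalar rational function H(z) = (1/2) B(Γ(z), Γ(z)) − φ(z) P(z) has, at each point z_α, a pole of order at most m_α (even though (1/2)B(Γ(z),Γ(z)) alone may have a pole of order up to 2m_α at z_α). -/

import Mathlib

open scoped BigOperators Topology
open Filter

/-- The partial-fraction part `χ(w)` of a twist function (site `a` has multiplicity `m a + 1`). -/
noncomputable def chiFun {n : ℕ} (z : Fin n → ℂ) (m : Fin n → ℕ)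
    (l : Fin n → ℕ → ℂ) (w : ℂ) : ℂ :=
  ∑ a, ∑ p ∈ Finset.range (m a + 1), l a p / (w - z a) ^ (p + 1)

/-- A `V`-valued Gaudin Lax matrix `Γ(w) = Σ_α Σ_p v^α_p (w - z_α)^{-(p+1)}`. -/
noncomputable def gamFun {n : ℕ} {V : Type*} [AddCommGroup V] [Module ℂ V]
    (z : Fin n → ℂ) (m : Fin n → ℕ) (v : Fin n → ℕ → V) (w : ℂ) : V :=
  ∑ a, ∑ p ∈ Finset.range (m a + 1), ((w - z a) ^ (p + 1))⁻¹ • v a p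

/-- The generalised Segal–Sugawara quantity
`D^α_p = (1/2) Σ_{q,r, q+r ≥ p} κ^α_{q+r-p} B(v^α_q, v^α_r)`. -/
noncomputable def ssInt {n : ℕ} {V : Type*} [AddCommGroup V] [Module ℂ V]
    (B : V →ₗ[ℂ] V →ₗ[ℂ] ℂ) (m : Fin n → ℕ) (κ : Fin n → ℕ → ℂ)
    (v : Fin n → ℕ → V) (a : Fin n) (p : ℕ) : ℂ :=
  (1 / 2) * ∑ q ∈ Finset.range (m a + 1), ∑ r ∈ Finset.range (m a + 1),
    if p ≤ q + r then κ a (q + r - p) * B (v a q) (v a r) else 0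

/-!
Near `z a` (multiplicity `M + 1`, `M = m a`) write every partial-fraction sum as its part at `z a`
plus a part holomorphic there. Then `H` is a combination of products
`(w - z b)^{-(p+1)} (w - z c)^{-(q+1)}`, and only the block `b = c = a` can have a pole of order
above `M + 1`. In that block the coefficient of `(w - z a)^{-(s+2)}` is
`Σ_{q+r=s} (½ B(v_q, v_r) - l_q D_r)`. Expanding `D_r = ½ Σ_{u,x} κ_{u+x-r} B(v_u, v_x)`, the
weight of `B(v_u, v_x)` in `Σ_{q+r=s} l_q D_r` is `½ Σ_{q+r=s, r≤u+x} l_q κ_{u+x-r}`, and for `s ≥ M`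
the system (2.8) makes this `½ δ_{u+x,s}` (it also forces `κ_j = 0` for `j < M`); so these
coefficients vanish.
-/

open Finset Asymptotics

section Coefficients

variable {R : Type*} [CommRing R] {M : ℕ} {l κ : ℕ → R}

/-- The system (2.8) relating the Taylor coefficients `κ` of `1/φ` to the levels `l` at one site. -/
def IsReciprocalCoeffs (M : ℕ) (l κ : ℕ → R) : Prop :=
  ∀ q r : ℕ, q ≤ M → r ≤ M →
    ∑ p ∈ range (M + 1 - r), κ (p + q) * l (p + r) = if q = r then 1 else 0

namespace IsReciprocalCoeffs

theorem eq_zero_of_lt (h : IsReciprocalCoeffs M l κ) {j : ℕ} (hj : j < M) : κ j = 0 := by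
  have top := h M M le_rfl le_rfl
  have low := h j M hj.le le_rfl
  simp only [Nat.add_sub_cancel_left, range_one, sum_singleton, zero_add, if_true] at top
  simp only [Nat.add_sub_cancel_left, range_one, sum_singleton, zero_add, if_neg hj.ne] at low
  calc κ j = κ j * (κ M * l M) := by rw [top, mul_one]
    _ = κ M * (κ j * l M) := by ring
    _ = 0 := by rw [low, mul_zero]

theorem sum_antidiag_mul_eq_ite (h : IsReciprocalCoeffs M l κ) {s k : ℕ} (hs : M ≤ s)
    (hk : k ≤ 2 * M) :
    ∑ q ∈ range (M + 1), ∑ r ∈ range (M + 1),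
      (if q + r = s ∧ r ≤ k then l q * κ (k - r) else 0) = if k = s then 1 else 0 := by
  have collapse : ∀ q ∈ range (M + 1), ∑ r ∈ range (M + 1),
      (if q + r = s ∧ r ≤ k then l q * κ (k - r) else 0)
        = if s - M ≤ q ∧ q ≤ s ∧ s ≤ k + q then l q * κ (k + q - s) else 0 := by
    intro q hq
    simp only [mem_range] at hq
    by_cases hc : s - M ≤ q ∧ q ≤ s ∧ s ≤ k + q
    · rw [if_pos hc, sum_eq_single (s - q)]
      · have hr : q + (s - q) = s ∧ s - q ≤ k := by omega
        rw [if_pos hr, show k - (s - q) = k + q - s by omega]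
      · intro r _ hr
        have hr' : ¬(q + r = s ∧ r ≤ k) := by omega
        rw [if_neg hr']
      · intro hr
        simp only [mem_range] at hr
        omega
    · rw [if_neg hc]
      refine sum_eq_zero fun r hr => ?_
      simp only [mem_range] at hr
      have hr' : ¬(q + r = s ∧ r ≤ k) := by omega
      rw [if_neg hr']
  rw [sum_congr rfl collapse]
  -- for `k < s` every `κ`-index is below `M`; otherwise the window is (2.8) at `(k - M, s - M)`
  rcases lt_or_ge k s with hks | hks
  · refine (sum_eq_zero fun q hq => ?_).trans (if_neg hks.ne).symm
    simp only [mem_range] at hq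
    split_ifs
    · rw [h.eq_zero_of_lt (by omega), mul_zero]
    · rfl
  · have shift : ∑ q ∈ range (M + 1),
        (if s - M ≤ q ∧ q ≤ s ∧ s ≤ k + q then l q * κ (k + q - s) else 0)
          = ∑ p ∈ range (M + 1 - (s - M)), κ (p + (k - M)) * l (p + (s - M)) := by
      have window : {q ∈ range (M + 1) | s - M ≤ q ∧ q ≤ s ∧ s ≤ k + q} = Ico (s - M) (M + 1) := by
        ext q; simp only [mem_filter, mem_range, mem_Ico]; omega
      rw [← sum_filter, window, sum_Ico_eq_sum_range]
      refine sum_congr rfl fun p _ => ?_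
      rw [mul_comm, show k + (s - M + p) - s = p + (k - M) by omega, add_comm (s - M)]
    rw [shift, h (k - M) (s - M) (by omega) (by omega)]
    exact if_congr (by omega) rfl rfl

theorem sum_antidiag_mul_sum_eq (h : IsReciprocalCoeffs M l κ) (b : ℕ → ℕ → R) {s : ℕ}
    (hs : M ≤ s) :
    ∑ q ∈ range (M + 1), ∑ r ∈ range (M + 1),
      (if q + r = s then l q * ∑ u ∈ range (M + 1), ∑ x ∈ range (M + 1),
          (if r ≤ u + x then κ (u + x - r) * b u x else 0) else 0)
      = ∑ q ∈ range (M + 1), ∑ r ∈ range (M + 1), (if q + r = s then b q r else 0) := by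
  have spread : ∀ q r, (if q + r = s then l q * ∑ u ∈ range (M + 1), ∑ x ∈ range (M + 1),
        (if r ≤ u + x then κ (u + x - r) * b u x else 0) else 0)
      = ∑ u ∈ range (M + 1), ∑ x ∈ range (M + 1),
          b u x * (if q + r = s ∧ r ≤ u + x then l q * κ (u + x - r) else 0) := by
    intro q r
    split_ifs with hqr
    · simp only [mul_sum, hqr, true_and, mul_ite, mul_zero]
      exact sum_congr rfl fun u _ => sum_congr rfl fun x _ => by split_ifs <;> ring
    · simp [hqr]
  rw [sum_congr rfl fun q _ => sum_congr rfl fun r _ => spread q r]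
  rw [sum_comm_cycle]
  refine sum_congr rfl fun u hu => ?_
  rw [sum_comm_cycle]
  refine sum_congr rfl fun x hx => ?_
  simp only [mem_range] at hu hx
  simp only [← mul_sum]
  rw [h.sum_antidiag_mul_eq_ite hs (by omega), mul_ite, mul_one, mul_zero]

end IsReciprocalCoeffs
end Coefficients

section PoleOrder

variable {𝕜 : Type*} [NontriviallyNormedField 𝕜] {z₀ : 𝕜}

theorem isBigO_inv_pow_sub_of_le {j k : ℕ} (hjk : j ≤ k) :
    (fun w => ((w - z₀) ^ j)⁻¹) =O[𝓝[≠] z₀] fun w => ((w - z₀) ^ k)⁻¹ := by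
  have bounded : (fun w => (w - z₀) ^ (k - j)) =O[𝓝[≠] z₀] fun _ => (1 : 𝕜) :=
    (((continuous_id.sub continuous_const).pow _).tendsto z₀).mono_left nhdsWithin_le_nhds
      |>.isBigO_one 𝕜
  refine (bounded.mul (isBigO_refl _ _)).congr' ?_ (Eventually.of_forall fun _ => one_mul _)
  filter_upwards [self_mem_nhdsWithin] with w hw
  rw [pow_sub₀ _ (sub_ne_zero.mpr hw) hjk, mul_right_comm,
    mul_inv_cancel₀ (pow_ne_zero _ (sub_ne_zero.mpr hw)), one_mul]

theorem isBigO_one_inv_pow_sub (k : ℕ) :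
    (fun _ => (1 : 𝕜)) =O[𝓝[≠] z₀] fun w => ((w - z₀) ^ k)⁻¹ := by
  simpa using isBigO_inv_pow_sub_of_le (z₀ := z₀) (Nat.zero_le k)

theorem isBigO_inv_pow_sub_of_ne {z₁ : 𝕜} (h : z₁ ≠ z₀) (j : ℕ) :
    (fun w => ((w - z₁) ^ j)⁻¹) =O[𝓝[≠] z₀] fun _ => (1 : 𝕜) := by
  have hcont : ContinuousAt (fun w => ((w - z₁) ^ j)⁻¹) z₀ :=
    ((continuousAt_id.sub continuousAt_const).pow j).inv₀ (pow_ne_zero _ (sub_ne_zero.mpr h.symm))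
  exact (hcont.tendsto.mono_left nhdsWithin_le_nhds).isBigO_one 𝕜

theorem isBigO_sum_sum_inv_pow_sub {N K : ℕ} (c : ℕ → ℕ → 𝕜)
    (hc : ∀ s, K ≤ s → ∑ q ∈ range N, ∑ r ∈ range N, (if q + r = s then c q r else 0) = 0) :
    (fun w => ∑ q ∈ range N, ∑ r ∈ range N,
        c q r * (((w - z₀) ^ (q + 1))⁻¹ * ((w - z₀) ^ (r + 1))⁻¹))
      =O[𝓝[≠] z₀] fun w => ((w - z₀) ^ (K + 1))⁻¹ := by
  have regroup : ∀ w, ∑ q ∈ range N, ∑ r ∈ range N,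
      c q r * (((w - z₀) ^ (q + 1))⁻¹ * ((w - z₀) ^ (r + 1))⁻¹)
        = ∑ s ∈ range (2 * N), (∑ q ∈ range N, ∑ r ∈ range N, if q + r = s then c q r else 0)
            * ((w - z₀) ^ (s + 2))⁻¹ := by
    intro w
    simp only [sum_mul, ite_mul, zero_mul]
    rw [← sum_comm_cycle]
    refine sum_congr rfl fun q hq => sum_congr rfl fun r hr => ?_
    simp only [mem_range] at hq hr
    rw [sum_ite_eq, if_pos (mem_range.mpr (by omega)), ← mul_inv, ← pow_add,
      show q + 1 + (r + 1) = q + r + 2 by ring]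
  simp only [regroup]
  refine IsBigO.fun_sum fun s _ => ?_
  rcases le_or_gt K s with hs | hs
  · simp only [hc s hs, zero_mul]
    exact isBigO_zero _ _
  · exact (isBigO_inv_pow_sub_of_le (by omega)).const_mul_left _

theorem Asymptotics.IsBigO.exists_norm_pow_sub_mul_le {f : 𝕜 → 𝕜} {k : ℕ}
    (h : f =O[𝓝[≠] z₀] fun w => ((w - z₀) ^ k)⁻¹) :
    ∃ C : ℝ, ∀ᶠ w in 𝓝[≠] z₀, ‖(w - z₀) ^ k * f w‖ ≤ C := by
  obtain ⟨C, hC⟩ := h.bound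
  refine ⟨C, ?_⟩
  filter_upwards [hC, self_mem_nhdsWithin] with w hw hne
  have hpow : (w - z₀) ^ k ≠ 0 := pow_ne_zero _ (sub_ne_zero.mpr hne)
  calc ‖(w - z₀) ^ k * f w‖ ≤ ‖(w - z₀) ^ k‖ * (C * ‖((w - z₀) ^ k)⁻¹‖) := by
        rw [norm_mul]; gcongr
    _ = C := by rw [norm_inv, mul_left_comm, mul_inv_cancel₀ (norm_ne_zero_iff.mpr hpow), mul_one]

end PoleOrder

section Hamiltonian

variable {n : ℕ} {V : Type*} [AddCommGroup V] [Module ℂ V]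
  (B : V →ₗ[ℂ] V →ₗ[ℂ] ℂ) (z : Fin n → ℂ) (m : Fin n → ℕ) (l : Fin n → ℕ → ℂ) (linf : ℂ)
  (κ : Fin n → ℕ → ℂ) (v : Fin n → ℕ → V)

noncomputable def ssFun (w : ℂ) : ℂ :=
  ∑ b, ∑ p ∈ range (m b + 1), ssInt B m κ v b p / (w - z b) ^ (p + 1)

noncomputable def hamFun (w : ℂ) : ℂ :=
  (1 / 2) * B (gamFun z m v w) (gamFun z m v w) - (chiFun z m l w - linf) * ssFun B z m κ v w

noncomputable def hamCoeff (b : Fin n) (p : ℕ) (c : Fin n) (q : ℕ) : ℂ :=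
  (1 / 2) * B (v b p) (v c q) - l b p * ssInt B m κ v c q

theorem hamFun_eq_sum (w : ℂ) :
    hamFun B z m l linf κ v w
      = ∑ b, ∑ c, ∑ p ∈ range (m b + 1), ∑ q ∈ range (m c + 1),
          hamCoeff B m l κ v b p c q * (((w - z b) ^ (p + 1))⁻¹ * ((w - z c) ^ (q + 1))⁻¹)
        + linf * ssFun B z m κ v w := by
  have pairing : B (gamFun z m v w) (gamFun z m v w)
      = ∑ b, ∑ c, ∑ p ∈ range (m b + 1), ∑ q ∈ range (m c + 1),
          B (v b p) (v c q) * (((w - z b) ^ (p + 1))⁻¹ * ((w - z c) ^ (q + 1))⁻¹) := by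
    have expand_left : ∀ y, B (gamFun z m v w) y
        = ∑ b, ∑ p ∈ range (m b + 1), ((w - z b) ^ (p + 1))⁻¹ * B (v b p) y := by
      simp only [gamFun, map_sum, LinearMap.sum_apply, map_smul, LinearMap.smul_apply, smul_eq_mul,
        implies_true]
    rw [expand_left]
    simp only [gamFun, map_sum, map_smul, smul_eq_mul, mul_sum]
    refine sum_congr rfl fun b _ => ?_
    rw [sum_comm]
    refine sum_congr rfl fun c _ => sum_congr rfl fun p _ => sum_congr rfl fun q _ => ?_
    ring
  have product : chiFun z m l w * ssFun B z m κ v w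
      = ∑ b, ∑ c, ∑ p ∈ range (m b + 1), ∑ q ∈ range (m c + 1),
          l b p * ssInt B m κ v c q * (((w - z b) ^ (p + 1))⁻¹ * ((w - z c) ^ (q + 1))⁻¹) := by
    simp only [chiFun, ssFun, sum_mul_sum]
    refine sum_congr rfl fun b _ => sum_congr rfl fun c _ => sum_congr rfl fun p _ =>
      sum_congr rfl fun q _ => ?_
    ring
  simp only [hamFun, hamCoeff, sub_mul, pairing, product, mul_sum, sum_sub_distrib, mul_assoc]
  ring

theorem sum_antidiag_hamCoeff_eq_zero {a : Fin n} (h : IsReciprocalCoeffs (m a) (l a) (κ a))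
    {s : ℕ} (hs : m a ≤ s) :
    ∑ p ∈ range (m a + 1), ∑ q ∈ range (m a + 1),
      (if p + q = s then hamCoeff B m l κ v a p a q else 0) = 0 := by
  have halves : ∀ p q, (if p + q = s then hamCoeff B m l κ v a p a q else 0)
      = (1 / 2) * ((if p + q = s then B (v a p) (v a q) else 0)
        - if p + q = s then l a p * ∑ u ∈ range (m a + 1), ∑ x ∈ range (m a + 1),
            (if q ≤ u + x then κ a (u + x - q) * B (v a u) (v a x) else 0) else 0) := by
    intro p q
    split_ifs
    · simp only [hamCoeff, ssInt]
      ring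
    · simp
  simp only [halves, ← mul_sum, sum_sub_distrib,
    h.sum_antidiag_mul_sum_eq (fun u x => B (v a u) (v a x)) hs, sub_self, mul_zero]

theorem isBigO_inv_pow_sub_of_injective (hz : Function.Injective z) (a : Fin n) {b : Fin n}
    {p : ℕ} (hp : p ≤ m b) :
    (fun w => ((w - z b) ^ (p + 1))⁻¹) =O[𝓝[≠] z a] fun w => ((w - z a) ^ (m a + 1))⁻¹ := by
  rcases eq_or_ne b a with rfl | hba
  · exact isBigO_inv_pow_sub_of_le (by omega)
  · exact (isBigO_inv_pow_sub_of_ne (hz.ne hba) _).trans (isBigO_one_inv_pow_sub _)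

theorem isBigO_hamCoeff_block (hz : Function.Injective z) {a : Fin n}
    (h : IsReciprocalCoeffs (m a) (l a) (κ a)) (b c : Fin n) :
    (fun w => ∑ p ∈ range (m b + 1), ∑ q ∈ range (m c + 1),
        hamCoeff B m l κ v b p c q * (((w - z b) ^ (p + 1))⁻¹ * ((w - z c) ^ (q + 1))⁻¹))
      =O[𝓝[≠] z a] fun w => ((w - z a) ^ (m a + 1))⁻¹ := by
  by_cases hbc : b = a ∧ c = a
  · obtain ⟨rfl, rfl⟩ := hbc
    exact isBigO_sum_sum_inv_pow_sub _ fun s hs => sum_antidiag_hamCoeff_eq_zero B m l κ v h hs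
  refine IsBigO.fun_sum fun p hp => IsBigO.fun_sum fun q hq => IsBigO.const_mul_left ?_ _
  simp only [mem_range] at hp hq
  rcases not_and_or.mp hbc with hb | hc
  · simpa only [one_mul] using (isBigO_inv_pow_sub_of_ne (hz.ne hb) _).mul
      (isBigO_inv_pow_sub_of_injective z m hz a (Nat.lt_succ_iff.mp hq))
  · simpa only [mul_one] using
      (isBigO_inv_pow_sub_of_injective z m hz a (Nat.lt_succ_iff.mp hp)).mul
        (isBigO_inv_pow_sub_of_ne (hz.ne hc) _)

theorem isBigO_hamFun (hz : Function.Injective z) {a : Fin n}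
    (h : IsReciprocalCoeffs (m a) (l a) (κ a)) :
    hamFun B z m l linf κ v =O[𝓝[≠] z a] fun w => ((w - z a) ^ (m a + 1))⁻¹ := by
  rw [funext (hamFun_eq_sum B z m l linf κ v)]
  refine (IsBigO.fun_sum fun b _ => IsBigO.fun_sum fun c _ =>
    isBigO_hamCoeff_block B z m l κ v hz h b c).add (IsBigO.const_mul_left ?_ linf)
  exact IsBigO.fun_sum fun b _ => IsBigO.fun_sum fun p hp =>
    (isBigO_inv_pow_sub_of_injective z m hz a
      (Nat.lt_succ_iff.mp (mem_range.mp hp))).const_mul_left _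

end Hamiltonian

theorem pole_order_of_quadratic_Hamiltonian_general
    {n : ℕ} {V : Type*} [AddCommGroup V] [Module ℂ V]
    (B : V →ₗ[ℂ] V →ₗ[ℂ] ℂ)
    (z : Fin n → ℂ) (m : Fin n → ℕ) (l : Fin n → ℕ → ℂ)
    (linf : ℂ)
    (hz : Function.Injective z)
    -- the coefficients `κ^α_p`, characterised by the linear system (2.8) of the paper
    (κ : Fin n → ℕ → ℂ)
    (hκ : ∀ a, ∀ q r : ℕ, q ≤ m a → r ≤ m a →
      ∑ p ∈ Finset.range (m a + 1 - r), κ a (p + q) * l a (p + r)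
        = if q = r then 1 else 0)
    (v : Fin n → ℕ → V) :
    ∀ a : Fin n, ∃ C : ℝ,
      ∀ᶠ w in 𝓝[≠] (z a),
        ‖(w - z a) ^ (m a + 1) *
          ((1 / 2) * B (gamFun z m v w) (gamFun z m v w)
            - (chiFun z m l w - linf) *
              ∑ b, ∑ p ∈ Finset.range (m b + 1),
                ssInt B m κ v b p / (w - z b) ^ (p + 1))‖ ≤ C :=
  fun a => (isBigO_hamFun B z m l linf κ v hz (hκ a)).exists_norm_pow_sub_mul_le

/-- **Pole order of the quadratic Hamiltonian** (Proposition A.1, pointwise/bilinear-form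
version).  With `P(z) = Σ_α Σ_p D^α_p (z - z_α)^{-(p+1)}`, the scalar rational function
`H(z) = (1/2) B(Γ(z), Γ(z)) - φ(z) P(z)` has, at each point `z_α`, a pole of order at most
`m_α` (i.e. `(z - z_α)^{m_α} H(z)` is bounded near `z_α`). -/
theorem pole_order_of_quadratic_Hamiltonian
    {n : ℕ} {V : Type*} [AddCommGroup V] [Module ℂ V]
    (B : V →ₗ[ℂ] V →ₗ[ℂ] ℂ) (hB : ∀ x y, B x y = B y x)
    (z : Fin n → ℂ) (m : Fin n → ℕ) (l : Fin n → ℕ → ℂ)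
    (linf : ℂ)
    (hz : Function.Injective z)
    (hl : ∀ a, l a (m a) ≠ 0)
    -- the coefficients `κ^α_p`, characterised by the linear system (2.8) of the paper
    (κ : Fin n → ℕ → ℂ)
    (hκ : ∀ a, ∀ q r : ℕ, q ≤ m a → r ≤ m a →
      ∑ p ∈ Finset.range (m a + 1 - r), κ a (p + q) * l a (p + r)
        = if q = r then 1 else 0)
    (v : Fin n → ℕ → V) :
    ∀ a : Fin n, ∃ C : ℝ,
      ∀ᶠ w in 𝓝[≠] (z a),
        ‖(w - z a) ^ (m a + 1) *
          ((1 / 2) * B (gamFun z m v w) (gamFun z m v w)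
            - (chiFun z m l w - linf) *
              ∑ b, ∑ p ∈ Finset.range (m b + 1),
                ssInt B m κ v b p / (w - z b) ^ (p + 1))‖ ≤ C :=
  pole_order_of_quadratic_Hamiltonian_general B z m l linf hz κ hκ v
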